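/- For any undirected connected graph G, the compressing information satisfies C(G) ≤ (1 − Φ(G)) · H¹(G) + Φ(G), where Φ(G) is the conductance of G and H¹(G) the Shannon entropy of the degree distribution of G. -/
import Mathlib


open Finset

open scoped Classical

/-- An encoding tree over a finite vertex set `V`: a rooted tree whose nodes carry
nonempty subsets (markers) of `V`, the root carries `V`, the markers of the children
of any non-leaf node partition the node's marker, every non-leaf node has at least
two children, and leaves carry singletons. -/
structure EncTree (V : Type) [Fintype V] [DecidableEq V] : Type 1 where
  node : Type
  [fin : Fintype node]
  [deq : DecidableEq node]
  root : node
  parent : node → node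
  parent_root : parent root = root
  depth : node → ℕ
  depth_root : depth root = 0
  depth_parent : ∀ a, a ≠ root → depth a = depth (parent a) + 1
  mark : node → Finset V
  mark_root : mark root = Finset.univ
  mark_nonempty : ∀ a, (mark a).Nonempty
  mark_subset : ∀ a, a ≠ root → mark a ⊆ mark (parent a)
  children_partition : ∀ a, (∃ b, b ≠ a ∧ parent b = a) →
    ∀ x ∈ mark a, ∃! b, b ≠ a ∧ parent b = a ∧ x ∈ mark b
  children_two : ∀ a b, b ≠ a → parent b = a → ∃ c, c ≠ a ∧ c ≠ b ∧ parent c = a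
  leaf_singleton : ∀ a, (∀ b, b ≠ a → parent b ≠ a) → (mark a).card = 1

attribute [instance] EncTree.fin EncTree.deq

namespace SiLeM

variable {V : Type} [Fintype V] [DecidableEq V]

/-- A node of an encoding tree is a leaf if it has no children. -/
def IsLeaf (T : EncTree V) (a : T.node) : Prop :=
  ∀ b, b ≠ a → T.parent b ≠ a

/-- Volume of a set of vertices: total degree. -/
noncomputable def vol (G : SimpleGraph V) (A : Finset V) : ℝ :=
  ∑ v ∈ A, (G.degree v : ℝ)

/-- Volume of the graph: total degree of all vertices. -/
noncomputable def volG (G : SimpleGraph V) : ℝ := ∑ v : V, (G.degree v : ℝ)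

/-- `g_A`: the number of edges with exactly one endpoint in `A`
(counted as ordered pairs entering `A`). -/
noncomputable def ecut (G : SimpleGraph V) (A : Finset V) : ℝ :=
  ((Finset.univ.filter
      (fun p : V × V => G.Adj p.1 p.2 ∧ p.1 ∉ A ∧ p.2 ∈ A)).card : ℝ)

/-- Structural entropy of `G` given by the encoding tree `T`. -/
noncomputable def HT (G : SimpleGraph V) (T : EncTree V) : ℝ :=
  -∑ a ∈ Finset.univ.filter (fun a : T.node => a ≠ T.root),
      (ecut G (T.mark a) / volG G) *
        Real.logb 2 (vol G (T.mark a) / vol G (T.mark (T.parent a)))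

/-- One-dimensional structural entropy: Shannon entropy of the degree distribution. -/
noncomputable def H1 (G : SimpleGraph V) : ℝ :=
  -∑ v : V, ((G.degree v : ℝ) / volG G) * Real.logb 2 ((G.degree v : ℝ) / volG G)

/-- Compressing information of `G` given by the encoding tree `T`. -/
noncomputable def CT (G : SimpleGraph V) (T : EncTree V) : ℝ :=
  -∑ a ∈ Finset.univ.filter (fun a : T.node => a ≠ T.root),
      ((vol G (T.mark a) - ecut G (T.mark a)) / volG G) *
        Real.logb 2 (vol G (T.mark a) / vol G (T.mark (T.parent a)))

/-- Structural entropy of `G`: minimum over all encoding trees. -/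
noncomputable def SE (G : SimpleGraph V) : ℝ :=
  sInf {x | ∃ T : EncTree V, x = HT G T}

/-- `k`-dimensional structural entropy: minimum over encoding trees of height ≤ k. -/
noncomputable def SEk (G : SimpleGraph V) (k : ℕ) : ℝ :=
  sInf {x | ∃ T : EncTree V, (∀ a, T.depth a ≤ k) ∧ x = HT G T}

/-- Compressing information of `G`: maximum over all encoding trees. -/
noncomputable def CInfo (G : SimpleGraph V) : ℝ :=
  sSup {x | ∃ T : EncTree V, x = CT G T}

/-- `k`-dimensional compressing information. -/
noncomputable def Ck (G : SimpleGraph V) (k : ℕ) : ℝ :=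
  sSup {x | ∃ T : EncTree V, (∀ a, T.depth a ≤ k) ∧ x = CT G T}

/-- Decoding information of `G`. -/
noncomputable def DInfo (G : SimpleGraph V) : ℝ :=
  sSup {x | ∃ T : EncTree V, x = H1 G - HT G T}

/-- `k`-dimensional decoding information. -/
noncomputable def Dk (G : SimpleGraph V) (k : ℕ) : ℝ :=
  sSup {x | ∃ T : EncTree V, (∀ a, T.depth a ≤ k) ∧ x = H1 G - HT G T}

/-- Conductance of a subset `S`. -/
noncomputable def condS (G : SimpleGraph V) (S : Finset V) : ℝ :=
  ecut G S / min (vol G S) (vol G Sᶜ)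

/-- Conductance of the graph. -/
noncomputable def conductance (G : SimpleGraph V) : ℝ :=
  sInf {x | ∃ S : Finset V, S.Nonempty ∧ S ≠ Finset.univ ∧ x = condS G S}

/-- `H̃(Y = β | X = α)` for an edge `(x, y)` with codewords `α, β`: the sum is over
the nodes `δ` with `γ ⊂ δ ⊆ β` where `γ` is the longest common initial segment of
`α` and `β`; these are exactly the nodes whose marker contains `y` but not `x`. -/
noncomputable def Htilde (G : SimpleGraph V) (T : EncTree V) (x y : V) : ℝ :=
  -∑ a ∈ Finset.univ.filter (fun a : T.node => y ∈ T.mark a ∧ x ∉ T.mark a),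
      Real.logb 2 (vol G (T.mark a) / vol G (T.mark (T.parent a)))

/-- `Ĩ(X = α; Y = β)` for an edge `(x, y)`: the sum over the nodes `δ` with
`λ ⊂ δ ⊆ γ`, i.e. the non-root nodes whose marker contains both `x` and `y`. -/
noncomputable def Itilde (G : SimpleGraph V) (T : EncTree V) (x y : V) : ℝ :=
  -∑ a ∈ Finset.univ.filter
      (fun a : T.node => a ≠ T.root ∧ x ∈ T.mark a ∧ y ∈ T.mark a),
      Real.logb 2 (vol G (T.mark a) / vol G (T.mark (T.parent a)))


set_option linter.unusedSectionVars false
set_option linter.unusedVariables false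

variable (T : EncTree V) (G : SimpleGraph V)

lemma eq_root_of_depth_eq_zero {a : T.node} (h : T.depth a = 0) : a = T.root := by
  by_contra hc; have := T.depth_parent a hc; omega

lemma depth_pos_of_ne_root {a : T.node} (h : a ≠ T.root) : 0 < T.depth a := by
  rw [T.depth_parent a h]; omega

lemma parent_ne_self {a : T.node} (h : a ≠ T.root) : T.parent a ≠ a := by
  intro he
  have h2 := T.depth_parent a h
  rw [he] at h2; omega

lemma child_ne_root {a b : T.node} (hb : b ≠ a) (hp : T.parent b = a) : b ≠ T.root := by
  intro h; subst h; rw [T.parent_root] at hp; exact hb hp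

lemma sibling_disjoint {a b c : T.node} (hb : b ≠ a) (hpb : T.parent b = a)
    (hc : c ≠ a) (hpc : T.parent c = a) (hbc : b ≠ c) :
    Disjoint (T.mark b) (T.mark c) := by
  rw [Finset.disjoint_left]
  intro x hxb hxc
  have hx : x ∈ T.mark a := by
    have := T.mark_subset b (child_ne_root T hb hpb) hxb
    rwa [hpb] at this
  obtain ⟨u, _, huniq⟩ := T.children_partition a ⟨b, hb, hpb⟩ x hx
  exact hbc ((huniq b ⟨hb, hpb, hxb⟩).trans (huniq c ⟨hc, hpc, hxc⟩).symm)

lemma mark_subset_iterate (a : T.node) (k : ℕ) :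
    T.mark a ⊆ T.mark (T.parent^[k] a) := by
  induction k with
  | zero => simp
  | succ n ih =>
    rw [Function.iterate_succ_apply']
    by_cases h : T.parent^[n] a = T.root
    · rw [h, T.parent_root]; rw [h] at ih; exact ih
    · exact ih.trans (T.mark_subset _ h)

lemma depth_parent_iterate {a : T.node} (k : ℕ) (hk : k ≤ T.depth a) :
    T.depth (T.parent^[k] a) = T.depth a - k := by
  induction k with
  | zero => simp
  | succ n ih =>
    have h1 := ih (by omega)
    rw [Function.iterate_succ_apply']
    have hne : T.parent^[n] a ≠ T.root := by
      intro h; rw [h, T.depth_root] at h1; omega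
    have := T.depth_parent _ hne; omega

lemma eq_of_depth_eq {v : V} :
    ∀ n {b c : T.node}, T.depth b = n → T.depth c = n →
      v ∈ T.mark b → v ∈ T.mark c → b = c := by
  intro n
  induction n with
  | zero =>
    intro b c hb hc _ _
    rw [eq_root_of_depth_eq_zero T hb, eq_root_of_depth_eq_zero T hc]
  | succ n ih =>
    intro b c hb hc hvb hvc
    have hbr : b ≠ T.root := by intro h; rw [h, T.depth_root] at hb; omega
    have hcr : c ≠ T.root := by intro h; rw [h, T.depth_root] at hc; omega
    have hdb : T.depth (T.parent b) = n := by have := T.depth_parent b hbr; omega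
    have hdc : T.depth (T.parent c) = n := by have := T.depth_parent c hcr; omega
    have hpb : v ∈ T.mark (T.parent b) := T.mark_subset b hbr hvb
    have hpc : v ∈ T.mark (T.parent c) := T.mark_subset c hcr hvc
    have hpp : T.parent b = T.parent c := ih hdb hdc hpb hpc
    have hbne : b ≠ T.parent b := fun he => parent_ne_self T hbr he.symm
    have hcne : c ≠ T.parent b := by
      rw [hpp]; exact fun he => parent_ne_self T hcr he.symm
    obtain ⟨u, _, huniq⟩ := T.children_partition (T.parent b) ⟨b, hbne, rfl⟩ v hpb
    exact (huniq b ⟨hbne, rfl, hvb⟩).trans (huniq c ⟨hcne, hpp.symm, hvc⟩).symm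

lemma ancestor_of_mem {v : V} {b c : T.node} (hvb : v ∈ T.mark b) (hvc : v ∈ T.mark c)
    (h : T.depth c ≤ T.depth b) : c = T.parent^[T.depth b - T.depth c] b := by
  refine eq_of_depth_eq T (T.depth c) rfl ?_ hvc (mark_subset_iterate T b _ hvb)
  rw [depth_parent_iterate T _ (Nat.sub_le _ _)]; omega

lemma leaf_eq_of_mem {v : V} {l a : T.node} (hl : IsLeaf T l)
    (hd : T.depth l ≤ T.depth a) (hv : v ∈ T.mark l) (hva : v ∈ T.mark a) : a = l := by
  have h := ancestor_of_mem T hva hv hd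
  rcases Nat.eq_zero_or_pos (T.depth a - T.depth l) with h0 | hpos
  · exact eq_of_depth_eq T (T.depth a) rfl (by omega) hva hv
  · exfalso
    set k := T.depth a - T.depth l with hk
    have hsucc : k - 1 + 1 = k := by omega
    have h2 : T.parent (T.parent^[k - 1] a) = l := by
      have h3 : T.parent^[k - 1 + 1] a = l := by rw [hsucc]; exact h.symm
      rw [Function.iterate_succ_apply'] at h3; exact h3
    refine hl (T.parent^[k - 1] a) ?_ h2
    intro he
    have hdd := depth_parent_iterate T (k - 1) (show k - 1 ≤ T.depth a by omega)
    rw [he] at hdd; omega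

lemma leaf_disjoint {l₁ l₂ : T.node} (h1 : IsLeaf T l₁) (h2 : IsLeaf T l₂)
    (hne : l₁ ≠ l₂) : Disjoint (T.mark l₁) (T.mark l₂) := by
  rw [Finset.disjoint_left]
  intro v hv1 hv2
  rcases le_total (T.depth l₁) (T.depth l₂) with h | h
  · exact hne ((leaf_eq_of_mem T h1 h hv1 hv2).symm)
  · exact hne (leaf_eq_of_mem T h2 h hv2 hv1)

lemma mark_ne_univ {a : T.node} (h : a ≠ T.root) : T.mark a ≠ Finset.univ := by
  have hane : a ≠ T.parent a := fun he => parent_ne_self T h he.symm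
  obtain ⟨c, hc1, hc2, hc3⟩ := T.children_two (T.parent a) a hane rfl
  obtain ⟨x, hx⟩ := T.mark_nonempty c
  have hdisj := sibling_disjoint T hane rfl hc1 hc3 (Ne.symm hc2)
  intro huniv
  exact (Finset.disjoint_left.mp hdisj (huniv ▸ Finset.mem_univ x)) hx

lemma exists_leaf_mem (v : V) : ∃ l : T.node, IsLeaf T l ∧ v ∈ T.mark l := by
  suffices h : ∀ n (a : T.node), (T.mark a).card ≤ n → v ∈ T.mark a →
      ∃ l : T.node, IsLeaf T l ∧ v ∈ T.mark l by
    exact h (T.mark T.root).card T.root le_rfl (by rw [T.mark_root]; exact Finset.mem_univ v)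
  intro n
  induction n with
  | zero =>
    intro a hcard hva
    exact absurd (Finset.card_pos.mpr ⟨v, hva⟩) (by omega)
  | succ n ih =>
    intro a hcard hva
    by_cases hl : IsLeaf T a
    · exact ⟨a, hl, hva⟩
    · simp only [IsLeaf, not_forall] at hl
      obtain ⟨b, hb1, hb2⟩ := hl
      rw [not_not] at hb2
      obtain ⟨u, ⟨hu1, hu2, hu3⟩, -⟩ := T.children_partition a ⟨b, hb1, hb2⟩ v hva
      obtain ⟨c, hc1, hc2, hc3⟩ := T.children_two a u hu1 hu2
      obtain ⟨x, hx⟩ := T.mark_nonempty c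
      have hdisj := sibling_disjoint T hu1 hu2 hc1 hc3 (Ne.symm hc2)
      have hsub : T.mark u ⊆ T.mark a := by
        have := T.mark_subset u (child_ne_root T hu1 hu2); rwa [hu2] at this
      have hxa : x ∈ T.mark a := by
        have := T.mark_subset c (child_ne_root T hc1 hc3) hx; rwa [hc3] at this
      have hxu : x ∉ T.mark u := fun hxu => (Finset.disjoint_left.mp hdisj hxu) hx
      have hlt : (T.mark u).card < (T.mark a).card :=
        Finset.card_lt_card ((Finset.ssubset_iff_of_subset hsub).mpr ⟨x, hxa, hxu⟩)
      exact ih u (by omega) hu3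

lemma degree_pos (hconn : G.Connected) (hcard : 1 < Fintype.card V) (v : V) :
    0 < G.degree v := by
  obtain ⟨w, hw⟩ := Fintype.exists_ne_of_one_lt_card hcard v
  rw [SimpleGraph.degree_pos_iff_exists_adj]
  obtain ⟨p⟩ := hconn.preconnected v w
  cases p with
  | nil => exact absurd rfl hw
  | cons h q => exact ⟨_, h⟩

lemma vol_nonneg (A : Finset V) : 0 ≤ vol G A :=
  Finset.sum_nonneg fun v _ => Nat.cast_nonneg _

lemma vol_mono {A B : Finset V} (h : A ⊆ B) : vol G A ≤ vol G B :=
  Finset.sum_le_sum_of_subset_of_nonneg h fun v _ _ => Nat.cast_nonneg _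

lemma vol_univ : vol G Finset.univ = volG G := rfl

lemma vol_le_volG (A : Finset V) : vol G A ≤ volG G :=
  vol_mono G (Finset.subset_univ A)

lemma vol_compl (A : Finset V) : vol G Aᶜ = volG G - vol G A := by
  have := Finset.sum_add_sum_compl A (fun v => (G.degree v : ℝ))
  unfold vol volG; linarith

lemma vol_pos (hconn : G.Connected) (hcard : 1 < Fintype.card V)
    {A : Finset V} (hA : A.Nonempty) : 0 < vol G A := by
  obtain ⟨v, hv⟩ := hA
  refine Finset.sum_pos (fun w _ => ?_) ⟨v, hv⟩
  exact_mod_cast degree_pos G hconn hcard w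

lemma ecut_nonneg (A : Finset V) : 0 ≤ ecut G A := Nat.cast_nonneg _

lemma ecut_le_vol (A : Finset V) : ecut G A ≤ vol G A := by
  unfold ecut vol
  have hsub : (Finset.univ.filter
      (fun p : V × V => G.Adj p.1 p.2 ∧ p.1 ∉ A ∧ p.2 ∈ A)) ⊆
      A.biUnion (fun y => (G.neighborFinset y).image (fun x => (x, y))) := by
    intro p hp
    simp only [Finset.mem_filter, Finset.mem_univ, true_and] at hp
    obtain ⟨hadj, -, h2⟩ := hp
    simp only [Finset.mem_biUnion, Finset.mem_image, SimpleGraph.mem_neighborFinset]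
    exact ⟨p.2, h2, p.1, hadj.symm, rfl⟩
  calc ((Finset.univ.filter
      (fun p : V × V => G.Adj p.1 p.2 ∧ p.1 ∉ A ∧ p.2 ∈ A)).card : ℝ)
      ≤ ((A.biUnion (fun y => (G.neighborFinset y).image (fun x => (x, y)))).card : ℝ) := by
        exact_mod_cast Nat.cast_le.mpr (Finset.card_le_card hsub)
    _ ≤ ∑ y ∈ A, (G.degree y : ℝ) := by
        rw [← Nat.cast_sum]
        refine Nat.cast_le.mpr ((Finset.card_biUnion_le).trans ?_)
        refine Finset.sum_le_sum fun y _ => ?_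
        exact le_trans Finset.card_image_le (le_of_eq (G.card_neighborFinset_eq_degree y))

lemma ecut_le_vol_compl (A : Finset V) : ecut G A ≤ vol G Aᶜ := by
  unfold ecut vol
  have hsub : (Finset.univ.filter
      (fun p : V × V => G.Adj p.1 p.2 ∧ p.1 ∉ A ∧ p.2 ∈ A)) ⊆
      Aᶜ.biUnion (fun x => (G.neighborFinset x).image (fun y => (x, y))) := by
    intro p hp
    simp only [Finset.mem_filter, Finset.mem_univ, true_and] at hp
    obtain ⟨hadj, h1, -⟩ := hp
    simp only [Finset.mem_biUnion, Finset.mem_image, SimpleGraph.mem_neighborFinset,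
      Finset.mem_compl]
    exact ⟨p.1, h1, p.2, hadj, rfl⟩
  calc ((Finset.univ.filter
      (fun p : V × V => G.Adj p.1 p.2 ∧ p.1 ∉ A ∧ p.2 ∈ A)).card : ℝ)
      ≤ ((Aᶜ.biUnion (fun x => (G.neighborFinset x).image (fun y => (x, y)))).card : ℝ) := by
        exact_mod_cast Nat.cast_le.mpr (Finset.card_le_card hsub)
    _ ≤ ∑ x ∈ Aᶜ, (G.degree x : ℝ) := by
        rw [← Nat.cast_sum]
        refine Nat.cast_le.mpr ((Finset.card_biUnion_le).trans ?_)
        refine Finset.sum_le_sum fun y _ => ?_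
        exact le_trans Finset.card_image_le (le_of_eq (G.card_neighborFinset_eq_degree y))

lemma conductance_nonneg : 0 ≤ conductance G := by
  refine Real.sInf_nonneg fun x hx => ?_
  obtain ⟨S, -, -, rfl⟩ := hx
  exact div_nonneg (ecut_nonneg G S) (le_min (vol_nonneg G S) (vol_nonneg G Sᶜ))

lemma conductance_le_condS {S : Finset V} (hS : S.Nonempty) (hS' : S ≠ Finset.univ) :
    conductance G ≤ condS G S := by
  refine csInf_le ⟨0, fun x hx => ?_⟩ ⟨S, hS, hS', rfl⟩
  obtain ⟨S', -, -, rfl⟩ := hx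
  exact div_nonneg (ecut_nonneg G S') (le_min (vol_nonneg G S') (vol_nonneg G S'ᶜ))

lemma ecut_ge (hconn : G.Connected) (hcard : 1 < Fintype.card V)
    {S : Finset V} (hS : S.Nonempty) (hS' : S ≠ Finset.univ) :
    conductance G * min (vol G S) (vol G Sᶜ) ≤ ecut G S := by
  have hm : 0 < min (vol G S) (vol G Sᶜ) := by
    refine lt_min (vol_pos G hconn hcard hS) (vol_pos G hconn hcard ?_)
    rw [← Finset.card_pos, Finset.card_compl]
    have h2 : S.card < Fintype.card V := by
      rw [← Finset.card_univ]
      exact Finset.card_lt_card (Finset.ssubset_univ_iff.mpr hS')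
    omega
  have := conductance_le_condS G hS hS'
  unfold condS at this
  rw [le_div_iff₀ hm] at this
  linarith

lemma conductance_le_one (hconn : G.Connected) (hcard : 1 < Fintype.card V) :
    conductance G ≤ 1 := by
  obtain ⟨v⟩ := hconn.nonempty
  have hne : ({v} : Finset V) ≠ Finset.univ := by
    obtain ⟨w, hw⟩ := Fintype.exists_ne_of_one_lt_card hcard v
    intro h
    have : w ∈ ({v} : Finset V) := h ▸ Finset.mem_univ w
    exact hw (Finset.mem_singleton.mp this)
  refine (conductance_le_condS G (Finset.singleton_nonempty v) hne).trans ?_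
  unfold condS
  have hm : 0 < min (vol G {v}) (vol G {v}ᶜ) := by
    refine lt_min (vol_pos G hconn hcard (Finset.singleton_nonempty v))
      (vol_pos G hconn hcard ?_)
    rw [← Finset.card_pos, Finset.card_compl]
    simp only [Finset.card_singleton]
    omega
  rw [div_le_one hm]
  exact le_min (ecut_le_vol G _) (ecut_le_vol_compl G _)

section Identity

lemma vol_mark_pos (hconn : G.Connected) (hcard : 1 < Fintype.card V) (a : T.node) :
    0 < vol G (T.mark a) :=
  vol_pos G hconn hcard (T.mark_nonempty a)

lemma root_not_leaf (hcard : 1 < Fintype.card V) : ¬ IsLeaf T T.root := by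
  intro h
  have h1 := T.leaf_singleton T.root h
  rw [T.mark_root, Finset.card_univ] at h1
  omega

lemma childSet_fiber (b : T.node) :
    (Finset.univ.filter (fun a : T.node => a ≠ T.root)).filter (fun a => T.parent a = b) =
      Finset.univ.filter (fun a => a ≠ b ∧ T.parent a = b) := by
  ext a
  simp only [Finset.mem_filter, Finset.mem_univ, true_and]
  constructor
  · rintro ⟨h1, h2⟩
    refine ⟨?_, h2⟩
    intro he
    subst he
    exact parent_ne_self T h1 h2
  · rintro ⟨h1, h2⟩
    exact ⟨child_ne_root T h1 h2, h2⟩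

lemma child_vol_sum {b : T.node} (hb : ¬ IsLeaf T b) :
    ∑ a ∈ Finset.univ.filter (fun a : T.node => a ≠ b ∧ T.parent a = b),
      vol G (T.mark a) = vol G (T.mark b) := by
  classical
  set C := Finset.univ.filter (fun a : T.node => a ≠ b ∧ T.parent a = b) with hC
  simp only [IsLeaf, not_forall] at hb
  obtain ⟨c, hc1, hc2⟩ := hb
  rw [not_not] at hc2
  have hmark : T.mark b = C.biUnion T.mark := by
    ext x
    simp only [Finset.mem_biUnion, hC, Finset.mem_filter, Finset.mem_univ, true_and]
    constructor
    · intro hx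
      obtain ⟨u, ⟨hu1, hu2, hu3⟩, -⟩ := T.children_partition b ⟨c, hc1, hc2⟩ x hx
      exact ⟨u, ⟨hu1, hu2⟩, hu3⟩
    · rintro ⟨u, ⟨hu1, hu2⟩, hu3⟩
      have := T.mark_subset u (child_ne_root T hu1 hu2) hu3
      rwa [hu2] at this
  have hdisj : ∀ a₁ ∈ C, ∀ a₂ ∈ C, a₁ ≠ a₂ → Disjoint (T.mark a₁) (T.mark a₂) := by
    intro a₁ h₁ a₂ h₂ hne
    simp only [hC, Finset.mem_filter, Finset.mem_univ, true_and] at h₁ h₂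
    exact sibling_disjoint T h₁.1 h₁.2 h₂.1 h₂.2 hne
  rw [hmark]
  unfold vol
  exact (Finset.sum_biUnion hdisj).symm

lemma leaf_sum (f : V → ℝ) :
    ∑ l ∈ Finset.univ.filter (fun l : T.node => IsLeaf T l), ∑ v ∈ T.mark l, f v =
      ∑ v : V, f v := by
  classical
  have hdisj : ∀ a₁ ∈ Finset.univ.filter (fun l : T.node => IsLeaf T l),
      ∀ a₂ ∈ Finset.univ.filter (fun l : T.node => IsLeaf T l), a₁ ≠ a₂ →
        Disjoint (T.mark a₁) (T.mark a₂) := by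
    intro a₁ h₁ a₂ h₂ hne
    simp only [Finset.mem_filter, Finset.mem_univ, true_and] at h₁ h₂
    exact leaf_disjoint T h₁ h₂ hne
  rw [← Finset.sum_biUnion hdisj]
  congr 1
  ext v
  simp only [Finset.mem_biUnion, Finset.mem_univ, iff_true, Finset.mem_filter, true_and]
  obtain ⟨l, hl, hv⟩ := exists_leaf_mem T v
  exact ⟨l, hl, hv⟩

lemma sum_VL (hcard : 1 < Fintype.card V) :
    ∑ a ∈ Finset.univ.filter (fun a : T.node => a ≠ T.root),
      vol G (T.mark a) *
        (Real.logb 2 (vol G (T.mark (T.parent a))) - Real.logb 2 (vol G (T.mark a))) =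
      volG G * Real.logb 2 (volG G) -
        ∑ v : V, (G.degree v : ℝ) * Real.logb 2 (G.degree v) := by
  classical
  set F := Finset.univ.filter (fun a : T.node => a ≠ T.root) with hF
  have hsplit : ∑ a ∈ F, vol G (T.mark a) *
      (Real.logb 2 (vol G (T.mark (T.parent a))) - Real.logb 2 (vol G (T.mark a))) =
      (∑ a ∈ F, vol G (T.mark a) * Real.logb 2 (vol G (T.mark (T.parent a)))) -
      (∑ a ∈ F, vol G (T.mark a) * Real.logb 2 (vol G (T.mark a))) := by
    rw [← Finset.sum_sub_distrib]
    exact Finset.sum_congr rfl fun a _ => by ring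
  rw [hsplit]
  -- first sum: regroup by parent
  have h1 : (∑ a ∈ F, vol G (T.mark a) * Real.logb 2 (vol G (T.mark (T.parent a)))) =
      ∑ b ∈ Finset.univ.filter (fun b : T.node => ¬ IsLeaf T b),
        vol G (T.mark b) * Real.logb 2 (vol G (T.mark b)) := by
    rw [← Finset.sum_fiberwise_of_maps_to (g := T.parent) (fun a _ => Finset.mem_univ _)
      (f := fun a => vol G (T.mark a) * Real.logb 2 (vol G (T.mark (T.parent a))))]
    have hterm : ∀ b : T.node,
        ∑ a ∈ F.filter (fun a => T.parent a = b),
          vol G (T.mark a) * Real.logb 2 (vol G (T.mark (T.parent a))) =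
        (if ¬ IsLeaf T b then vol G (T.mark b) * Real.logb 2 (vol G (T.mark b)) else 0) := by
      intro b
      have hfib : F.filter (fun a => T.parent a = b) =
          Finset.univ.filter (fun a => a ≠ b ∧ T.parent a = b) := childSet_fiber T b
      rw [hfib]
      by_cases hb : IsLeaf T b
      · simp only [hb, not_true, if_false]
        have : Finset.univ.filter (fun a : T.node => a ≠ b ∧ T.parent a = b) = ∅ := by
          ext a
          simp only [Finset.mem_filter, Finset.mem_univ, true_and, Finset.notMem_empty,
            iff_false, not_and]
          intro h1
          exact hb a h1
        rw [this, Finset.sum_empty]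
      · simp only [hb, not_false_iff, if_true]
        have : ∀ a ∈ Finset.univ.filter (fun a : T.node => a ≠ b ∧ T.parent a = b),
            vol G (T.mark a) * Real.logb 2 (vol G (T.mark (T.parent a))) =
            vol G (T.mark a) * Real.logb 2 (vol G (T.mark b)) := by
          intro a ha
          simp only [Finset.mem_filter, Finset.mem_univ, true_and] at ha
          rw [ha.2]
        rw [Finset.sum_congr rfl this, ← Finset.sum_mul, child_vol_sum T G hb]
    rw [Finset.sum_congr rfl fun b _ => hterm b, ← Finset.sum_filter]
  rw [h1]
  -- nonleaf set decomposition
  have hroot : T.root ∈ Finset.univ.filter (fun b : T.node => ¬ IsLeaf T b) := by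
    simp only [Finset.mem_filter, Finset.mem_univ, true_and]
    exact root_not_leaf T hcard
  rw [← Finset.sum_erase_add _ _ hroot]
  -- second sum decomposition
  have h2 : (∑ a ∈ F, vol G (T.mark a) * Real.logb 2 (vol G (T.mark a))) =
      (∑ a ∈ (Finset.univ.filter (fun b : T.node => ¬ IsLeaf T b)).erase T.root,
        vol G (T.mark a) * Real.logb 2 (vol G (T.mark a))) +
      (∑ l ∈ Finset.univ.filter (fun l : T.node => IsLeaf T l),
        vol G (T.mark l) * Real.logb 2 (vol G (T.mark l))) := by
    have e1 : F.filter (fun a => ¬ IsLeaf T a) =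
        (Finset.univ.filter (fun b : T.node => ¬ IsLeaf T b)).erase T.root := by
      ext a
      simp only [hF, Finset.mem_filter, Finset.mem_univ, true_and, Finset.mem_erase]
    have e2 : F.filter (fun a => ¬ ¬ IsLeaf T a) =
        Finset.univ.filter (fun l : T.node => IsLeaf T l) := by
      ext a
      simp only [hF, Finset.mem_filter, Finset.mem_univ, true_and, not_not]
      constructor
      · rintro ⟨-, h⟩; exact h
      · intro h
        refine ⟨?_, h⟩
        intro he
        exact root_not_leaf T hcard (he ▸ h)
    rw [← Finset.sum_filter_add_sum_filter_not F (fun a => ¬ IsLeaf T a), e1, e2]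
  rw [h2]
  have h3 : (∑ l ∈ Finset.univ.filter (fun l : T.node => IsLeaf T l),
      vol G (T.mark l) * Real.logb 2 (vol G (T.mark l))) =
      ∑ v : V, (G.degree v : ℝ) * Real.logb 2 (G.degree v) := by
    rw [← leaf_sum T (fun v => (G.degree v : ℝ) * Real.logb 2 (G.degree v))]
    refine Finset.sum_congr rfl fun l hl => ?_
    simp only [Finset.mem_filter, Finset.mem_univ, true_and] at hl
    obtain ⟨v, hv⟩ := Finset.card_eq_one.mp (T.leaf_singleton l hl)
    rw [hv]
    simp [vol]
  rw [h3, T.mark_root, vol_univ]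
  ring

end Identity

lemma chain_bound (hconn : G.Connected) (hcard : 1 < Fintype.card V) :
    ∑ a ∈ Finset.univ.filter
        (fun a : T.node => a ≠ T.root ∧ volG G < 2 * vol G (T.mark a)),
      (Real.logb 2 (vol G (T.mark (T.parent a))) - Real.logb 2 (vol G (T.mark a))) ≤ 1 := by
  classical
  set B := Finset.univ.filter
      (fun a : T.node => a ≠ T.root ∧ volG G < 2 * vol G (T.mark a)) with hB
  rcases Finset.eq_empty_or_nonempty B with he | hne
  · rw [he, Finset.sum_empty]; norm_num
  obtain ⟨astar, hastar, hmax⟩ := Finset.exists_max_image B T.depth hne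
  have hmem := hastar
  rw [hB, Finset.mem_filter] at hmem
  obtain ⟨-, hsr, hsv⟩ := hmem
  set d := T.depth astar with hd
  have hdpos : 0 < d := depth_pos_of_ne_root T hsr
  have himg : B = (Finset.range d).image (fun k => T.parent^[k] astar) := by
    ext b
    simp only [Finset.mem_image, Finset.mem_range, hB, Finset.mem_filter,
      Finset.mem_univ, true_and]
    constructor
    · rintro ⟨hbr, hbv⟩
      have hdb : T.depth b ≤ d := hmax b (by
        rw [hB, Finset.mem_filter]; exact ⟨Finset.mem_univ b, hbr, hbv⟩)
      have hndisj : ¬ Disjoint (T.mark b) (T.mark astar) := by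
        intro hdisj
        have hsum : vol G (T.mark b) + vol G (T.mark astar) =
            vol G (T.mark b ∪ T.mark astar) := by
          unfold vol; rw [Finset.sum_union hdisj]
        have := vol_le_volG G (T.mark b ∪ T.mark astar)
        linarith
      obtain ⟨v, hv1, hv2⟩ := Finset.not_disjoint_iff.mp hndisj
      refine ⟨d - T.depth b, ?_, (ancestor_of_mem T hv2 hv1 hdb).symm⟩
      have := depth_pos_of_ne_root T hbr
      omega
    · rintro ⟨k, hk, rfl⟩
      have hdk : T.depth (T.parent^[k] astar) = d - k :=
        depth_parent_iterate T k (by omega)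
      constructor
      · intro h; rw [h, T.depth_root] at hdk; omega
      · have := vol_mono G (mark_subset_iterate T astar k)
        linarith
  rw [himg]
  have hinj : ∀ k₁ ∈ Finset.range d, ∀ k₂ ∈ Finset.range d,
      T.parent^[k₁] astar = T.parent^[k₂] astar → k₁ = k₂ := by
    intro k₁ h₁ k₂ h₂ heq
    rw [Finset.mem_range] at h₁ h₂
    have e₁ := depth_parent_iterate T k₁ (show k₁ ≤ d by omega)
    have e₂ := depth_parent_iterate T k₂ (show k₂ ≤ d by omega)
    rw [heq] at e₁
    omega
  rw [Finset.sum_image hinj]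
  have hterm : ∀ k ∈ Finset.range d,
      (Real.logb 2 (vol G (T.mark (T.parent (T.parent^[k] astar)))) -
        Real.logb 2 (vol G (T.mark (T.parent^[k] astar)))) =
      (fun k => Real.logb 2 (vol G (T.mark (T.parent^[k] astar)))) (k + 1) -
      (fun k => Real.logb 2 (vol G (T.mark (T.parent^[k] astar)))) k := by
    intro k _
    simp only [Function.iterate_succ_apply']
  have tele := Finset.sum_range_sub
    (fun k => Real.logb 2 (vol G (T.mark (T.parent^[k] astar)))) d
  rw [Finset.sum_congr rfl hterm, tele]
  have hV : 0 < volG G := by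
    have : (Finset.univ : Finset V).Nonempty := by
      have : Nonempty V := hconn.nonempty
      exact Finset.univ_nonempty
    rw [← vol_univ]
    exact vol_pos G hconn hcard this
  have hvs : 0 < vol G (T.mark astar) := vol_mark_pos T G hconn hcard astar
  have h1 : Real.logb 2 (vol G (T.mark (T.parent^[d] astar))) ≤ Real.logb 2 (volG G) :=
    Real.logb_le_logb_of_le one_lt_two (vol_mark_pos T G hconn hcard _) (vol_le_volG G _)
  have h2 : Real.logb 2 (volG G) - Real.logb 2 (vol G (T.mark astar)) ≤ 1 := by
    have hh : Real.logb 2 (volG G / 2) ≤ Real.logb 2 (vol G (T.mark astar)) := by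
      have hV : 0 < volG G := by
        have hne : (Finset.univ : Finset V).Nonempty := by
          have : Nonempty V := hconn.nonempty
          exact Finset.univ_nonempty
        rw [← vol_univ]; exact vol_pos G hconn hcard hne
      apply Real.logb_le_logb_of_le one_lt_two (by positivity)
      linarith
    have hdiv : Real.logb 2 (volG G / 2) = Real.logb 2 (volG G) - 1 := by
      rw [Real.logb_div (ne_of_gt hV) (by norm_num)]
      simp [Real.logb_self_eq_one]
    linarith
  simp only [Function.iterate_zero_apply]
  linarith

lemma CT_le (hconn : G.Connected) (hcard : 1 < Fintype.card V) :
    CT G T ≤ (1 - conductance G) * H1 G + conductance G := by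
  classical
  set F := Finset.univ.filter (fun a : T.node => a ≠ T.root) with hF
  have hV : 0 < volG G := by
    have hne : (Finset.univ : Finset V).Nonempty := by
      have : Nonempty V := hconn.nonempty
      exact Finset.univ_nonempty
    rw [← vol_univ]; exact vol_pos G hconn hcard hne
  have hdeg : ∀ v : V, (0:ℝ) < (G.degree v : ℝ) := by
    intro v; exact_mod_cast degree_pos G hconn hcard v
  have hpos : ∀ a : T.node, 0 < vol G (T.mark a) := vol_mark_pos T G hconn hcard
  set Vm : T.node → ℝ := fun a => vol G (T.mark a) with hVm
  set L : T.node → ℝ := fun a =>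
    Real.logb 2 (Vm (T.parent a)) - Real.logb 2 (Vm a) with hL
  have hLnn : ∀ a ∈ F, 0 ≤ L a := by
    intro a ha
    rw [hF, Finset.mem_filter] at ha
    have hsub := vol_mono G (T.mark_subset a ha.2)
    have := Real.logb_le_logb_of_le one_lt_two (hpos a) hsub
    simp only [hL, hVm, sub_nonneg]
    exact this
  have hCT : CT G T = ∑ a ∈ F, ((Vm a - ecut G (T.mark a)) / volG G) * L a := by
    unfold CT
    have hco : ∀ a ∈ F,
        ((vol G (T.mark a) - ecut G (T.mark a)) / volG G) *
          Real.logb 2 (vol G (T.mark a) / vol G (T.mark (T.parent a))) =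
        -(((Vm a - ecut G (T.mark a)) / volG G) * L a) := by
      intro a _
      rw [Real.logb_div (ne_of_gt (hpos a)) (ne_of_gt (hpos (T.parent a)))]
      simp only [hL, hVm]
      ring
    rw [Finset.sum_congr rfl hco, Finset.sum_neg_distrib, neg_neg]
  have hg : ∀ a ∈ F,
      conductance G * min (Vm a) (volG G - Vm a) ≤ ecut G (T.mark a) := by
    intro a ha
    rw [hF, Finset.mem_filter] at ha
    have := ecut_ge G hconn hcard (T.mark_nonempty a) (mark_ne_univ T ha.2)
    rwa [vol_compl] at this
  -- main estimate
  set Φ := conductance G with hΦ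
  have hΦ0 : 0 ≤ Φ := conductance_nonneg G
  set A := ∑ a ∈ F, (Vm a / volG G) * L a with hA
  set Bx := ∑ a ∈ F, (min (Vm a) (volG G - Vm a) / volG G) * L a with hBx
  set X := ∑ a ∈ F, ((Vm a - min (Vm a) (volG G - Vm a)) / volG G) * L a with hX
  have hABX : A = Bx + X := by
    rw [hA, hBx, hX, ← Finset.sum_add_distrib]
    exact Finset.sum_congr rfl fun a _ => by ring
  have hAH : A = H1 G := by
    have h1 : A = (volG G * Real.logb 2 (volG G) -
        ∑ v : V, (G.degree v : ℝ) * Real.logb 2 (G.degree v)) / volG G := by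
      rw [hA, ← sum_VL T G hcard, Finset.sum_div]
      exact Finset.sum_congr rfl fun a _ => by simp only [hVm]; ring
    have h2 : H1 G = (volG G * Real.logb 2 (volG G) -
        ∑ v : V, (G.degree v : ℝ) * Real.logb 2 (G.degree v)) / volG G := by
      unfold H1
      have hco : ∀ v : V, ((G.degree v : ℝ) / volG G) *
          Real.logb 2 ((G.degree v : ℝ) / volG G) =
          ((G.degree v : ℝ) * Real.logb 2 (G.degree v) -
            (G.degree v : ℝ) * Real.logb 2 (volG G)) / volG G := by
        intro v
        rw [Real.logb_div (ne_of_gt (hdeg v)) (ne_of_gt hV)]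
        ring
      rw [Finset.sum_congr rfl fun v _ => hco v, ← Finset.sum_div,
        Finset.sum_sub_distrib, ← Finset.sum_mul]
      unfold volG
      ring
    rw [h1, h2]
  have hX1 : X ≤ 1 := by
    have step : X ≤ ∑ a ∈ F.filter (fun a => volG G < 2 * Vm a), L a := by
      rw [Finset.sum_filter, hX]
      refine Finset.sum_le_sum fun a ha => ?_
      by_cases hb : volG G < 2 * Vm a
      · rw [if_pos hb]
        have hco : (Vm a - min (Vm a) (volG G - Vm a)) / volG G ≤ 1 := by
          rw [div_le_one hV]
          have h1 : 0 ≤ min (Vm a) (volG G - Vm a) :=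
            le_min (le_of_lt (hpos a)) (by
              have := vol_le_volG G (T.mark a)
              simp only [hVm]; linarith)
          have h2 : Vm a ≤ volG G := vol_le_volG G (T.mark a)
          linarith
        calc (Vm a - min (Vm a) (volG G - Vm a)) / volG G * L a
            ≤ 1 * L a := mul_le_mul_of_nonneg_right hco (hLnn a ha)
          _ = L a := one_mul _
      · rw [if_neg hb]
        have hmin : min (Vm a) (volG G - Vm a) = Vm a := min_eq_left (by linarith)
        rw [hmin]
        simp
    refine step.trans ?_
    have hfil : F.filter (fun a => volG G < 2 * Vm a) =
        Finset.univ.filter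
          (fun a : T.node => a ≠ T.root ∧ volG G < 2 * vol G (T.mark a)) := by
      rw [hF, Finset.filter_filter]
    rw [hfil]
    exact chain_bound T G hconn hcard
  have hstep : CT G T ≤ A - Φ * Bx := by
    rw [hCT]
    have h1 : ∑ a ∈ F, ((Vm a - ecut G (T.mark a)) / volG G) * L a ≤
        ∑ a ∈ F, ((Vm a - Φ * min (Vm a) (volG G - Vm a)) / volG G) * L a := by
      refine Finset.sum_le_sum fun a ha => ?_
      refine mul_le_mul_of_nonneg_right ?_ (hLnn a ha)
      exact (div_le_div_iff_of_pos_right hV).mpr (by linarith [hg a ha])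
    refine h1.trans (le_of_eq ?_)
    rw [hA, hBx, Finset.mul_sum, ← Finset.sum_sub_distrib]
    exact Finset.sum_congr rfl fun a _ => by ring
  have hmul : Φ * Bx = Φ * A - Φ * X := by rw [hABX]; ring
  have hΦX : Φ * X ≤ Φ * 1 := mul_le_mul_of_nonneg_left hX1 hΦ0
  rw [← hAH]
  nlinarith [hstep, hmul, hΦX]

lemma CT_eq_zero (h1 : Fintype.card V = 1) : CT G T = 0 := by
  unfold CT
  have hemp : Finset.univ.filter (fun a : T.node => a ≠ T.root) = ∅ := by
    ext a
    simp only [Finset.mem_filter, Finset.mem_univ, true_and, Finset.notMem_empty,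
      iff_false]
    intro ha
    apply mark_ne_univ T ha
    have hle : (T.mark a).card ≤ 1 := by
      have := Finset.card_le_card (Finset.subset_univ (T.mark a))
      rwa [Finset.card_univ, h1] at this
    have hge : 1 ≤ (T.mark a).card := Finset.card_pos.mpr (T.mark_nonempty a)
    apply Finset.eq_univ_of_card
    omega
  rw [hemp, Finset.sum_empty, neg_zero]

lemma H1_zero (h1 : Fintype.card V = 1) : H1 G = 0 := by
  have hdeg : ∀ v : V, G.degree v = 0 := by
    intro v
    rw [← SimpleGraph.card_neighborFinset_eq_degree, Finset.card_eq_zero]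
    ext w
    simp only [SimpleGraph.mem_neighborFinset, Finset.notMem_empty, iff_false]
    intro hadj
    have : Subsingleton V := Fintype.card_le_one_iff_subsingleton.mp (le_of_eq h1)
    exact G.ne_of_adj hadj (Subsingleton.elim v w)
  unfold H1
  simp [hdeg]

lemma conductance_zero (h1 : Fintype.card V = 1) : conductance G = 0 := by
  unfold conductance
  have hemp : {x : ℝ | ∃ S : Finset V, S.Nonempty ∧ S ≠ Finset.univ ∧ x = condS G S} = ∅ := by
    rw [Set.eq_empty_iff_forall_notMem]
    rintro x ⟨S, hS, hSu, -⟩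
    apply hSu
    apply Finset.eq_univ_of_card
    have hge : 1 ≤ S.card := Finset.card_pos.mpr hS
    have hle : S.card ≤ 1 := by
      have := Finset.card_le_card (Finset.subset_univ S)
      rwa [Finset.card_univ, h1] at this
    omega
  rw [hemp, Real.sInf_empty]

lemma H1_nonneg (hconn : G.Connected) (hcard : 1 < Fintype.card V) : 0 ≤ H1 G := by
  unfold H1
  rw [neg_nonneg]
  have hV : 0 < volG G := by
    have hne : (Finset.univ : Finset V).Nonempty := by
      have : Nonempty V := hconn.nonempty
      exact Finset.univ_nonempty
    rw [← vol_univ]; exact vol_pos G hconn hcard hne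
  have hterm : ∀ v ∈ (Finset.univ : Finset V),
      ((G.degree v : ℝ) / volG G) * Real.logb 2 ((G.degree v : ℝ) / volG G) ≤ 0 := by
    intro v _
    have hd : (0:ℝ) < (G.degree v : ℝ) := by exact_mod_cast degree_pos G hconn hcard v
    have hp1 : (G.degree v : ℝ) / volG G ≤ 1 := by
      rw [div_le_one hV]
      show (G.degree v : ℝ) ≤ ∑ w : V, (G.degree w : ℝ)
      exact Finset.single_le_sum (f := fun w => (G.degree w : ℝ))
        (fun w _ => Nat.cast_nonneg (G.degree w)) (Finset.mem_univ v)
    exact mul_nonpos_of_nonneg_of_nonpos (le_of_lt (div_pos hd hV))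
      (Real.logb_nonpos one_lt_two (le_of_lt (div_pos hd hV)) hp1)
  exact Finset.sum_nonpos hterm


end SiLeM

/-- Upper bound of compressing information:
`C(G) ≤ (1 − Φ(G))·H¹(G) + Φ(G)`. -/
theorem stmt9 {V : Type} [Fintype V] [DecidableEq V]
    (G : SimpleGraph V) (hconn : G.Connected) :
    SiLeM.CInfo G ≤
      (1 - SiLeM.conductance G) * SiLeM.H1 G + SiLeM.conductance G := by
  classical
  have hpos : 0 < Fintype.card V := @Fintype.card_pos V _ hconn.nonempty
  rcases lt_or_ge 1 (Fintype.card V) with hcard | hcard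
  · -- main case
    refine Real.sSup_le ?_ ?_
    · rintro x ⟨T, rfl⟩
      exact SiLeM.CT_le T G hconn hcard
    · have hΦ0 := SiLeM.conductance_nonneg G
      have hΦ1 := SiLeM.conductance_le_one G hconn hcard
      have hH := SiLeM.H1_nonneg G hconn hcard
      nlinarith [mul_nonneg (by linarith : (0:ℝ) ≤ 1 - SiLeM.conductance G) hH]
  · have h1 : Fintype.card V = 1 := by omega
    rw [SiLeM.conductance_zero G h1, SiLeM.H1_zero G h1]
    norm_num
    refine Real.sSup_le ?_ le_rfl
    rintro x ⟨T, rfl⟩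
    exact le_of_eq (SiLeM.CT_eq_zero T G h1)
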